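/- arXiv:1202.5924 — 7 statements merged into one kernel-verified Lean document; each statement's English description precedes it below -/
import Mathlib

section
/- Let x be a nonzero complex number and (λ_n)_{n≥1} a sequence of nonzero complex numbers. Then the infinite series ∑_{n≥0} ((λ₁−x)⋯(λ_n−x))/(λ₁⋯λ_n·λ_{n+1}) converges to 1/x if and only if the infinite product ∏_{n≥1} (λ_n−x)/λ_n tends to 0 (i.e., the partial products converge to 0). -/
open Finset Filter Topology

/-!
With `P k = ∏_{n<k} (λ_n - x)/λ_n`, the `n`-th term of the series is `(P n - P (n+1)) / x`, so the
series telescopes: its `k`-th partial sum is `(1 - P k) / x`, which tends to `1/x` exactly when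
`P k → 0`.
-/

section Telescoping

variable {K : Type*} [Field K] (x : K) (lam : ℕ → K)

theorem prod_range_sub_div_sub_prod_range_succ {n : ℕ} (hlam : lam n ≠ 0) :
    ∏ i ∈ range n, (lam i - x) / lam i - ∏ i ∈ range (n + 1), (lam i - x) / lam i =
      x * ((∏ i ∈ range n, (lam i - x)) / ((∏ i ∈ range n, lam i) * lam n)) := by
  rw [prod_range_succ, prod_div_distrib]
  field_simp
  ring

theorem mul_sum_range_eq_one_sub_prod_range (hlam : ∀ n, lam n ≠ 0) (k : ℕ) :
    x * ∑ n ∈ range k, (∏ i ∈ range n, (lam i - x)) / ((∏ i ∈ range n, lam i) * lam n) =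
      1 - ∏ n ∈ range k, (lam n - x) / lam n := by
  simp_rw [mul_sum, ← prod_range_sub_div_sub_prod_range_succ x lam (hlam _), sum_range_sub',
    prod_range_zero]

end Telescoping

theorem tendsto_one_div_iff_tendsto_zero_of_mul_eq_one_sub {K α : Type*} [Field K] [TopologicalSpace K]
    [IsTopologicalDivisionRing K] {l : Filter α} {x : K} (hx : x ≠ 0) {S P : α → K}
    (hSP : ∀ a, x * S a = 1 - P a) :
    Tendsto S l (𝓝 (1 / x)) ↔ Tendsto P l (𝓝 0) := by
  rw [← tendsto_const_smul_iff₀ hx, ← tendsto_const_sub_iff 1 (c := 0), sub_zero]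
  simp only [smul_eq_mul, mul_one_div_cancel hx, hSP]

/-- For nonzero `x` and a sequence `(λ_n)` of nonzero complex numbers (here `lam n = λ_{n+1}`),
the series `∑_{n≥0} ((λ₁−x)⋯(λ_n−x))/(λ₁⋯λ_n·λ_{n+1})` converges to `1/x`
iff the partial products `∏_{n=1}^{k} (λ_n−x)/λ_n` tend to `0`. -/
theorem stmt1 (x : ℂ) (hx : x ≠ 0) (lam : ℕ → ℂ) (hlam : ∀ n, lam n ≠ 0) :
    Tendsto
        (fun k => ∑ n ∈ Finset.range k,
          (∏ i ∈ Finset.range n, (lam i - x)) /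
            ((∏ i ∈ Finset.range n, lam i) * lam n))
        atTop (𝓝 (1 / x))
      ↔ Tendsto (fun k => ∏ n ∈ Finset.range k, (lam n - x) / lam n) atTop (𝓝 0) :=
  tendsto_one_div_iff_tendsto_zero_of_mul_eq_one_sub hx (mul_sum_range_eq_one_sub_prod_range x lam hlam)
end

section
/- Let x be a nonzero complex number and (λ_n) a sequence of nonzero complex numbers such that for some θ < 1 and all sufficiently large n, |(λ_n−x)/λ_n| ≤ θ. Then the series ∑_{n≥0} ((λ₁−x)⋯(λ_n−x))/(λ₁⋯λ_n·λ_{n+1}) converges absolutely and its sum equals 1/x. -/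
/-!
With `a n = ∏_{i<n} (λ_i - x)/λ_i`, the `n`-th term of the series is `(a n - a (n+1))/x`.
The hypothesis gives `‖a (n+1)‖ ≤ θ ‖a n‖` eventually, so `‖a n‖` is summable by the ratio test;
hence the differences converge absolutely and the series telescopes to `a 0 / x = 1/x`.
-/

open Finset Filter

theorem hasSum_sub_succ {G : Type*} [AddCommGroup G] [TopologicalSpace G]
    [IsTopologicalAddGroup G] {a : ℕ → G} (ha : Summable a) :
    HasSum (fun n => a n - a (n + 1)) (a 0) := by
  have hshift := (hasSum_nat_add_iff' 1).2 ha.hasSum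
  simpa using ha.hasSum.sub hshift

theorem Summable.norm_sub_succ {E : Type*} [SeminormedAddCommGroup E] {a : ℕ → E}
    (ha : Summable fun n => ‖a n‖) : Summable fun n => ‖a n - a (n + 1)‖ :=
  .of_nonneg_of_le (fun _ => norm_nonneg _) (fun _ => norm_sub_le _ _)
    (ha.add ((summable_nat_add_iff 1).2 ha))

theorem summable_norm_prod_range_of_eventually_norm_le {R : Type*} [NormedCommRing R]
    {r : ℕ → R} {θ : ℝ} (hθ : θ < 1) {N : ℕ} (hr : ∀ n ≥ N, ‖r n‖ ≤ θ) :
    Summable fun n => ‖∏ i ∈ range n, r i‖ := by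
  refine summable_of_ratio_norm_eventually_le hθ ?_
  filter_upwards [eventually_ge_atTop N] with n hn
  simp only [norm_norm, prod_range_succ]
  calc ‖(∏ i ∈ range n, r i) * r n‖
      ≤ ‖∏ i ∈ range n, r i‖ * ‖r n‖ := norm_mul_le _ _
    _ ≤ ‖∏ i ∈ range n, r i‖ * θ := by gcongr; exact hr n hn
    _ = θ * ‖∏ i ∈ range n, r i‖ := mul_comm _ _

theorem prod_sub_div_prod_mul_eq {K : Type*} [Field K] {x : K} (hx : x ≠ 0) {lam : ℕ → K}
    {n : ℕ} (hn : lam n ≠ 0) :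
    (∏ i ∈ range n, (lam i - x)) / ((∏ i ∈ range n, lam i) * lam n) =
      ((∏ i ∈ range n, (lam i - x) / lam i) - ∏ i ∈ range (n + 1), (lam i - x) / lam i) / x := by
  rw [prod_range_succ, prod_div_distrib]
  field_simp
  ring

/-- If `x ≠ 0` and `|(λ_n−x)/λ_n| ≤ θ < 1` for all sufficiently large `n`, then the series
`∑_{n≥0} ((λ₁−x)⋯(λ_n−x))/(λ₁⋯λ_n·λ_{n+1})` converges absolutely with sum `1/x`. -/
theorem stmt2 (x : ℂ) (hx : x ≠ 0) (lam : ℕ → ℂ) (hlam : ∀ n, lam n ≠ 0)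
    (θ : ℝ) (hθ : θ < 1) (N : ℕ)
    (hbound : ∀ n ≥ N, ‖(lam n - x) / lam n‖ ≤ θ) :
    Summable (fun n => ‖(∏ i ∈ Finset.range n, (lam i - x)) /
        ((∏ i ∈ Finset.range n, lam i) * lam n)‖) ∧
      ∑' n : ℕ, (∏ i ∈ Finset.range n, (lam i - x)) /
          ((∏ i ∈ Finset.range n, lam i) * lam n) = 1 / x := by
  set a : ℕ → ℂ := fun n => ∏ i ∈ range n, (lam i - x) / lam i
  have hterm (n : ℕ) := prod_sub_div_prod_mul_eq hx (lam := lam) (hlam n)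
  have ha : Summable fun n => ‖a n‖ := summable_norm_prod_range_of_eventually_norm_le hθ hbound
  simp only [hterm, norm_div]
  refine ⟨ha.norm_sub_succ.div_const _, ?_⟩
  simpa [a] using ((hasSum_sub_succ ha.of_norm).div_const x).tsum_eq
end

section
/- Let G ⊆ ℂ be open, f holomorphic on G, Γ a positively oriented circle whose closed disc lies in G, and c₁,…,c_n, c points inside Γ. Define Δⁿf via the contour integral Δⁿf(z₁,…,z_{n+1}) = (1/(2πi))∮_Γ f(ξ)/∏_{k}(ξ−z_k) dξ. Then Δⁿf(c₁,…,c_{n−1},c,c) equals the derivative at c of the function w ↦ Δ^{n−1}f(c₁,…,c_{n−1},w). -/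
/-!
Write the integrand as `(ξ - z)⁻¹ • g ξ` with `g ξ = f ξ / ∏ k, (ξ - a k)`, which is continuous
on the circle. For `z` near `c` the kernel `(ξ - z)⁻¹` stays uniformly away from its pole, so its
`z`-derivative `(ξ - z)⁻²` may be taken under the integral sign (dominated convergence).
-/

open Finset Metric

namespace Complex

theorem hasDerivAt_circleTransform (R : ℝ) (w : ℂ) (g : ℂ → ℂ) (θ : ℝ) {z : ℂ}
    (hz : z ∈ ball w R) :
    HasDerivAt (fun z => circleTransform R w z g θ) (circleTransformDeriv R w z g θ) z := by
  have hne : circleMap w R θ - z ≠ 0 := sub_ne_zero.2 (circleMap_ne_mem_ball hz θ)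
  have h := (((hasDerivAt_id z).const_sub (circleMap w R θ)).inv hne).mul_const
    (g (circleMap w R θ))
  simpa [circleTransform, circleTransformDeriv, neg_div, div_eq_inv_mul] using
    (h.const_mul (deriv (circleMap w R) θ)).const_mul (2 * ↑Real.pi * I)⁻¹

theorem hasDerivAt_integral_circleTransform {R : ℝ} {w c : ℂ} {g : ℂ → ℂ}
    (hg : ContinuousOn g (sphere w R)) (hc : c ∈ ball w R) :
    HasDerivAt (fun z => ∫ θ in (0)..2 * Real.pi, circleTransform R w z g θ)
      (∫ θ in (0)..2 * Real.pi, circleTransformDeriv R w c g θ) c := by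
  have hR := pos_of_mem_ball hc
  obtain ⟨B, ε, hε, hεR, hB⟩ := circleTransformDeriv_bound hR hc hg
  refine (intervalIntegral.hasDerivAt_integral_of_dominated_loc_of_deriv_le
    (μ := MeasureTheory.volume) (F' := fun z => circleTransformDeriv R w z g)
    (ball_mem_nhds c hε) ?_ ?_ ?_ ?_ (intervalIntegrable_const (c := B)) ?_).2
  · filter_upwards [isOpen_ball.mem_nhds hc] with z hz
    exact (continuous_circleTransform hR hg hz).aestronglyMeasurable
  · exact (continuous_circleTransform hR hg hc).intervalIntegrable _ _
  · exact (continuous_circleTransformDeriv hR hg hc).aestronglyMeasurable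
  · exact .of_forall fun θ _ z hz => hB θ z hz
  · exact .of_forall fun θ _ z hz => hasDerivAt_circleTransform R w g θ (hεR hz)

theorem integral_circleTransformDeriv (R : ℝ) (w z : ℂ) (g : ℂ → ℂ) :
    ∫ θ in (0)..2 * Real.pi, circleTransformDeriv R w z g θ =
      (2 * Real.pi * I)⁻¹ • ∮ ξ in C(w, R), ((ξ - z) ^ 2)⁻¹ • g ξ := by
  simp_rw [circleTransformDeriv, circleIntegral, intervalIntegral.integral_smul]

theorem hasDerivAt_circleIntegral_sub_inv_smul {R : ℝ} {w c : ℂ} {g : ℂ → ℂ}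
    (hg : ContinuousOn g (sphere w R)) (hc : c ∈ ball w R) :
    HasDerivAt (fun z => (2 * Real.pi * I)⁻¹ • ∮ ξ in C(w, R), (ξ - z)⁻¹ • g ξ)
      ((2 * Real.pi * I)⁻¹ • ∮ ξ in C(w, R), ((ξ - c) ^ 2)⁻¹ • g ξ) c := by
  simp_rw [← integral_circleTransform, ← integral_circleTransformDeriv]
  exact hasDerivAt_integral_circleTransform hg hc

end Complex

theorem stmt10_general (G : Set ℂ) (f : ℂ → ℂ) (hf : DifferentiableOn ℂ f G)
    (m : ℕ) (w : ℂ) (R : ℝ) (hsub : closedBall w R ⊆ G)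
    (a : Fin m → ℂ) (ha : ∀ k, a k ∈ ball w R)
    (c : ℂ) (hc : c ∈ ball w R) :
    (2 * Real.pi * Complex.I)⁻¹ •
        (∮ ξ in C(w, R), f ξ / ((∏ k : Fin m, (ξ - a k)) * (ξ - c) * (ξ - c)))
      = deriv (fun z : ℂ =>
          (2 * Real.pi * Complex.I)⁻¹ •
            (∮ ξ in C(w, R), f ξ / ((∏ k : Fin m, (ξ - a k)) * (ξ - z)))) c := by
  set g : ℂ → ℂ := fun ξ => f ξ / ∏ k : Fin m, (ξ - a k)
  have hg : ContinuousOn g (sphere w R) := by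
    refine (hf.continuousOn.mono (sphere_subset_closedBall.trans hsub)).div
      (continuousOn_finsetProd _ fun k _ => continuousOn_id.sub continuousOn_const)
      fun ξ hξ => prod_ne_zero_iff.2 fun k _ => sub_ne_zero.2 ?_
    rintro rfl
    exact (mem_ball.1 (ha k)).ne (mem_sphere.1 hξ)
  calc _ = (2 * Real.pi * Complex.I)⁻¹ • ∮ ξ in C(w, R), ((ξ - c) ^ 2)⁻¹ • g ξ := by
        congr! 3 with ξ
        simp only [g, smul_eq_mul, div_eq_mul_inv, mul_inv, sq]
        ring
    _ = deriv (fun z => (2 * Real.pi * Complex.I)⁻¹ • ∮ ξ in C(w, R), (ξ - z)⁻¹ • g ξ) c :=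
        (Complex.hasDerivAt_circleIntegral_sub_inv_smul hg hc).deriv.symm
    _ = _ := by
        congr! 5 with z ξ
        simp only [g, smul_eq_mul, div_eq_mul_inv, mul_inv]
        ring

/-- With a repeated last node: `Δⁿf(c₁,…,c_{n−1},c,c)` equals the derivative at `c` of
`w ↦ Δ^{n−1}f(c₁,…,c_{n−1},w)`. -/
theorem stmt10 (G : Set ℂ) (hG : IsOpen G) (f : ℂ → ℂ) (hf : DifferentiableOn ℂ f G)
    (m : ℕ) (w : ℂ) (R : ℝ) (hR : 0 < R) (hsub : closedBall w R ⊆ G)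
    (a : Fin m → ℂ) (ha : ∀ k, a k ∈ ball w R)
    (c : ℂ) (hc : c ∈ ball w R) :
    (2 * Real.pi * Complex.I)⁻¹ •
        (∮ ξ in C(w, R), f ξ / ((∏ k : Fin m, (ξ - a k)) * (ξ - c) * (ξ - c)))
      = deriv (fun z : ℂ =>
          (2 * Real.pi * Complex.I)⁻¹ •
            (∮ ξ in C(w, R), f ξ / ((∏ k : Fin m, (ξ - a k)) * (ξ - z)))) c :=
  stmt10_general G f hf m w R hsub a ha c hc
end

section
/- Let D ⊆ ℂ be an open disc with centre c, f : D → ℂ holomorphic, and (c_n)_{n≥1} a sequence in D converging to c. Then for every z ∈ D, the Newton interpolation series ∑_{n≥0} Δⁿf(c₁,…,c_{n+1})·(z−c₁)⋯(z−c_n) converges absolutely to f(z), where Δⁿf(c₁,…,c_{n+1}) = (1/(2πi))∮_Γ f(ξ)/((ξ−c₁)⋯(ξ−c_{n+1})) dξ for any positively oriented circle Γ centered at c, contained in D, enclosing z and all the c_k. -/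
/-!
Write `P_n(x) = ∏_{i<n} (x - c_i)`. The telescoping identity
`1/(ξ - z) = ∑_{n<N} P_n(z)/P_{n+1}(ξ) + P_N(z)/(P_N(ξ)(ξ - z))`, inserted into Cauchy's
formula, shows that the `N`-th partial sum of the Newton series is `f(z)` minus a remainder
integral. On the circle `|ξ - c| = R` that remainder is at most a constant times
`∏_{i<N} |z - c_i|/(R - |c_i - c|)`, whose factors tend to `|z - c|/R < 1`. Hence these
products are summable, the remainder tends to `0`, and since every term of the series is a
difference of two consecutive remainders, the series converges absolutely.
-/

open Finset Metric Filter Topology Real Complex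

theorem inv_sub_eq_sum_add_newton_remainder {K : Type*} [Field K] {cs : ℕ → K} {ξ z : K}
    (hξz : ξ ≠ z) (hξ : ∀ i, ξ ≠ cs i) (N : ℕ) :
    (ξ - z)⁻¹ = ∑ n ∈ range N, (∏ i ∈ range n, (z - cs i)) / ∏ i ∈ range (n + 1), (ξ - cs i) +
      (∏ i ∈ range N, (z - cs i)) / ((∏ i ∈ range N, (ξ - cs i)) * (ξ - z)) := by
  induction N with
  | zero => simp
  | succ N ih =>
    rw [ih, sum_range_succ, add_assoc, prod_range_succ (fun i => ξ - cs i) N,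
      prod_range_succ (fun i => z - cs i) N]
    congr 1
    field_simp [sub_ne_zero.2 hξz, sub_ne_zero.2 (hξ N)]
    ring

theorem summable_prod_range_of_tendsto_lt_one {u : ℕ → ℝ} {l : ℝ} (hu : ∀ i, 0 ≤ u i)
    (h : Tendsto u atTop (𝓝 l)) (hl : l < 1) : Summable fun n => ∏ i ∈ range n, u i := by
  obtain ⟨r, hlr, hr1⟩ := exists_between hl
  refine summable_of_ratio_norm_eventually_le hr1 ?_
  filter_upwards [h.eventually_lt_const hlr] with n hn
  rw [prod_range_succ, norm_mul, mul_comm, Real.norm_of_nonneg (hu n)]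
  exact mul_le_mul_of_nonneg_right hn.le (norm_nonneg _)

theorem summable_norm_sub_succ_of_norm_le {E : Type*} [SeminormedAddCommGroup E] {g : ℕ → E}
    {w : ℕ → ℝ} {C : ℝ} (hg : ∀ n, ‖g n‖ ≤ C * w n) (hw : Summable w) :
    Summable fun n => ‖g n - g (n + 1)‖ := by
  refine .of_nonneg_of_le (fun _ => norm_nonneg _) (fun n => ?_)
    ((hw.add ((summable_nat_add_iff (f := w) 1).2 hw)).mul_left C)
  rw [mul_add]
  exact (norm_sub_le _ _).trans (add_le_add (hg n) (hg (n + 1)))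

theorem sub_dist_le_dist_of_mem_sphere {E : Type*} [PseudoMetricSpace E] {c ξ w : E} {R : ℝ}
    (hξ : ξ ∈ sphere c R) : R - dist w c ≤ dist ξ w := by
  rw [← mem_sphere.1 hξ]
  linarith [dist_triangle ξ w c]

theorem tendsto_norm_sub_div_sub_dist {E : Type*} [SeminormedAddCommGroup E] {cs : ℕ → E}
    {c : E} (h : Tendsto cs atTop (𝓝 c)) (z : E) {R : ℝ} (hR : R ≠ 0) :
    Tendsto (fun i => ‖z - cs i‖ / (R - dist (cs i) c)) atTop (𝓝 (dist z c / R)) := by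
  have hdist : Tendsto (fun i => R - dist (cs i) c) atTop (𝓝 R) := by
    simpa using (tendsto_const_nhds (x := R)).sub (h.dist (tendsto_const_nhds (x := c)))
  simpa [dist_eq_norm, Pi.div_def] using ((tendsto_const_nhds.sub h).norm).div hdist hR

/-- The node `cs i` plays the role of the paper's `c_{i+1}`. -/
noncomputable def dividedDiff (f : ℂ → ℂ) (c : ℂ) (R : ℝ) (cs : ℕ → ℂ) (n : ℕ) : ℂ :=
  (2 * π * I)⁻¹ • ∮ ξ in C(c, R), f ξ / ∏ i ∈ range (n + 1), (ξ - cs i)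

noncomputable def newtonRemainder (f : ℂ → ℂ) (c : ℂ) (R : ℝ) (cs : ℕ → ℂ) (z : ℂ) (N : ℕ) : ℂ :=
  (2 * π * I)⁻¹ • ∮ ξ in C(c, R),
    f ξ * (∏ i ∈ range N, (z - cs i)) / ((∏ i ∈ range N, (ξ - cs i)) * (ξ - z))

section NewtonSeries

variable {f : ℂ → ℂ} {c z : ℂ} {R : ℝ} {cs : ℕ → ℂ}

theorem sum_dividedDiff_mul_prod_eq_sub_newtonRemainder (hf : DiffContOnCl ℂ f (ball c R))
    (hz : z ∈ ball c R) (hcs : ∀ i, cs i ∈ ball c R) (N : ℕ) :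
    ∑ n ∈ range N, dividedDiff f c R cs n * ∏ i ∈ range n, (z - cs i) =
      f z - newtonRemainder f c R cs z N := by
  have hR : 0 < R := dist_nonneg.trans_lt hz
  have hfc : ContinuousOn f (sphere c R) :=
    hf.continuousOn.mono (closure_ball c hR.ne' ▸ sphere_subset_closedBall)
  have hne : ∀ ξ ∈ sphere c R, ∀ w ∈ ball c R, ξ - w ≠ 0 := fun ξ hξ w hw h =>
    Set.disjoint_left.1 sphere_disjoint_ball hξ (sub_eq_zero.1 h ▸ hw)
  have hprod : ∀ n, ∀ ξ ∈ sphere c R, ∏ i ∈ range n, (ξ - cs i) ≠ 0 := fun n ξ hξ =>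
    prod_ne_zero_iff.2 fun i _ => hne ξ hξ _ (hcs i)
  have hcont : ∀ n, ContinuousOn (fun ξ => ∏ i ∈ range n, (ξ - cs i)) (sphere c R) := fun n =>
    (continuous_finsetProd _ fun i _ => continuous_id.sub continuous_const).continuousOn
  have hterm : ∀ n ∈ range N, CircleIntegrable
      (fun ξ => f ξ / (∏ i ∈ range (n + 1), (ξ - cs i)) * ∏ i ∈ range n, (z - cs i)) c R :=
    fun n _ => ((hfc.div (hcont (n + 1)) (hprod (n + 1))).mul
      continuousOn_const).circleIntegrable hR.le
  have hrem : CircleIntegrable (fun ξ => f ξ * (∏ i ∈ range N, (z - cs i)) /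
      ((∏ i ∈ range N, (ξ - cs i)) * (ξ - z))) c R :=
    ((hfc.mul continuousOn_const).div ((hcont N).mul (continuousOn_id.sub continuousOn_const))
      fun ξ hξ => mul_ne_zero (hprod N ξ hξ) (hne ξ hξ z hz)).circleIntegrable hR.le
  have hkernel : Set.EqOn (fun ξ => (ξ - z)⁻¹ • f ξ)
      (fun ξ => ∑ n ∈ range N, f ξ / (∏ i ∈ range (n + 1), (ξ - cs i)) * ∏ i ∈ range n, (z - cs i) +
        f ξ * (∏ i ∈ range N, (z - cs i)) / ((∏ i ∈ range N, (ξ - cs i)) * (ξ - z)))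
      (sphere c R) := fun ξ hξ => by
    show (ξ - z)⁻¹ * f ξ = _
    rw [inv_sub_eq_sum_add_newton_remainder (sub_ne_zero.1 (hne ξ hξ z hz))
      (fun i => sub_ne_zero.1 (hne ξ hξ _ (hcs i))) N, add_mul, sum_mul]
    congr 1
    · exact sum_congr rfl fun n _ => by ring
    · ring
  rw [eq_sub_iff_add_eq, ← hf.two_pi_i_inv_smul_circleIntegral_sub_inv_smul hz,
    circleIntegral.integral_congr hR.le hkernel,
    circleIntegral.integral_add (CircleIntegrable.fun_sum _ hterm) hrem,
    circleIntegral.integral_fun_sum hterm, smul_add, smul_sum]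
  congr 1
  refine sum_congr rfl fun n _ => ?_
  rw [dividedDiff, smul_mul_assoc]
  exact congrArg _ (circleIntegral.integral_smul_const _ _ _ _).symm

theorem norm_newtonRemainder_le {M : ℝ} (hR : 0 ≤ R) (hM : ∀ ξ ∈ sphere c R, ‖f ξ‖ ≤ M)
    (hz : z ∈ ball c R) (hcs : ∀ i, cs i ∈ ball c R) (N : ℕ) :
    ‖newtonRemainder f c R cs z N‖ ≤
      R * (M / (R - dist z c) * ∏ i ∈ range N, ‖z - cs i‖ / (R - dist (cs i) c)) := by
  refine circleIntegral.norm_two_pi_i_inv_smul_integral_le_of_norm_le_const hR fun ξ hξ => ?_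
  have hlow : ∀ w, R - dist w c ≤ ‖ξ - w‖ := fun w =>
    (sub_dist_le_dist_of_mem_sphere hξ).trans_eq (dist_eq_norm ξ w)
  have hfz : ‖f ξ‖ / ‖ξ - z‖ ≤ M / (R - dist z c) :=
    div_le_div₀ ((norm_nonneg _).trans (hM ξ hξ)) (hM ξ hξ) (sub_pos.2 hz) (hlow z)
  have hnodes : ∏ i ∈ range N, ‖z - cs i‖ / ‖ξ - cs i‖ ≤
      ∏ i ∈ range N, ‖z - cs i‖ / (R - dist (cs i) c) :=
    prod_le_prod (fun _ _ => by positivity) fun i _ =>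
      div_le_div_of_nonneg_left (norm_nonneg _) (sub_pos.2 (hcs i)) (hlow (cs i))
  calc ‖f ξ * (∏ i ∈ range N, (z - cs i)) / ((∏ i ∈ range N, (ξ - cs i)) * (ξ - z))‖
      = ‖f ξ‖ / ‖ξ - z‖ * ∏ i ∈ range N, ‖z - cs i‖ / ‖ξ - cs i‖ := by
        simp only [norm_div, norm_mul, norm_prod, prod_div_distrib]
        ring
    _ ≤ _ := mul_le_mul hfz hnodes (prod_nonneg fun _ _ => by positivity)
        ((div_nonneg (norm_nonneg _) (norm_nonneg _)).trans hfz)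

end NewtonSeries

theorem stmt12_general (c : ℂ) (r : ℝ) (f : ℂ → ℂ)
    (hf : DifferentiableOn ℂ f (ball c r))
    (cs : ℕ → ℂ) (hlim : Tendsto cs atTop (𝓝 c))
    (z : ℂ)
    (R : ℝ) (hR0 : 0 < R) (hRr : R < r)
    (hzR : z ∈ ball c R) (hcsR : ∀ n, cs n ∈ ball c R) :
    Summable (fun n : ℕ =>
        ‖((2 * Real.pi * Complex.I)⁻¹ •
            (∮ ξ in C(c, R), f ξ / ∏ i ∈ Finset.range (n + 1), (ξ - cs i)))
          * ∏ i ∈ Finset.range n, (z - cs i)‖) ∧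
      ∑' n : ℕ,
          ((2 * Real.pi * Complex.I)⁻¹ •
              (∮ ξ in C(c, R), f ξ / ∏ i ∈ Finset.range (n + 1), (ξ - cs i)))
            * ∏ i ∈ Finset.range n, (z - cs i) = f z := by
  have hfR : DiffContOnCl ℂ f (ball c R) := hf.diffContOnCl_ball (closedBall_subset_ball hRr)
  obtain ⟨M, hM⟩ := (isCompact_sphere c R).exists_bound_of_continuousOn
    (hf.continuousOn.mono (sphere_subset_closedBall.trans (closedBall_subset_ball hRr)))
  set w : ℕ → ℝ := fun N => ∏ i ∈ range N, ‖z - cs i‖ / (R - dist (cs i) c)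
  have hw : Summable w := summable_prod_range_of_tendsto_lt_one
    (fun i => div_nonneg (norm_nonneg _) (sub_pos.2 (hcsR i)).le)
    (tendsto_norm_sub_div_sub_dist hlim z hR0.ne') ((div_lt_one hR0).2 hzR)
  set C := R * (M / (R - dist z c))
  have hrem : ∀ N, ‖newtonRemainder f c R cs z N‖ ≤ C * w N := fun N =>
    (norm_newtonRemainder_le hR0.le hM hzR hcsR N).trans_eq (mul_assoc _ _ _).symm
  have hpartial := sum_dividedDiff_mul_prod_eq_sub_newtonRemainder hfR hzR hcsR
  have hterm : ∀ n, dividedDiff f c R cs n * ∏ i ∈ range n, (z - cs i) =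
      newtonRemainder f c R cs z n - newtonRemainder f c R cs z (n + 1) := fun n => by
    have h := hpartial (n + 1)
    rw [sum_range_succ, hpartial n] at h
    linear_combination h
  have hsum : Summable fun n => ‖dividedDiff f c R cs n * ∏ i ∈ range n, (z - cs i)‖ := by
    simpa only [hterm] using summable_norm_sub_succ_of_norm_le hrem hw
  refine ⟨hsum, ((hasSum_iff_tendsto_nat_of_summable_norm hsum).2 ?_).tsum_eq⟩
  have hremlim : Tendsto (newtonRemainder f c R cs z) atTop (𝓝 0) :=
    squeeze_zero_norm hrem (by simpa using hw.tendsto_atTop_zero.const_mul C)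
  simpa [hpartial] using tendsto_const_nhds.sub hremlim

/-- Newton interpolation series: for `f` holomorphic on the open disc `D = ball c r`,
nodes `c_n ∈ D` with `c_n → c`, and `z ∈ D`, for any positively oriented circle
`C(c, R)` contained in `D` enclosing `z` and all the nodes, the series
`∑_{n≥0} Δⁿf(c₁,…,c_{n+1})·(z−c₁)⋯(z−c_n)` converges absolutely to `f(z)`. -/
theorem stmt12 (c : ℂ) (r : ℝ) (hr : 0 < r) (f : ℂ → ℂ)
    (hf : DifferentiableOn ℂ f (ball c r))
    (cs : ℕ → ℂ) (hcs : ∀ n, cs n ∈ ball c r) (hlim : Tendsto cs atTop (𝓝 c))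
    (z : ℂ) (hz : z ∈ ball c r)
    (R : ℝ) (hR0 : 0 < R) (hRr : R < r)
    (hzR : z ∈ ball c R) (hcsR : ∀ n, cs n ∈ ball c R) :
    Summable (fun n : ℕ =>
        ‖((2 * Real.pi * Complex.I)⁻¹ •
            (∮ ξ in C(c, R), f ξ / ∏ i ∈ Finset.range (n + 1), (ξ - cs i)))
          * ∏ i ∈ Finset.range n, (z - cs i)‖) ∧
      ∑' n : ℕ,
          ((2 * Real.pi * Complex.I)⁻¹ •
              (∮ ξ in C(c, R), f ξ / ∏ i ∈ Finset.range (n + 1), (ξ - cs i)))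
            * ∏ i ∈ Finset.range n, (z - cs i) = f z :=
  stmt12_general c r f hf cs hlim z R hR0 hRr hzR hcsR
end

section
/- Let D ⊆ ℂ be an open disc with centre c, and (c_n) a sequence in D converging to c. If (a_n) and (b_n) are sequences of complex numbers such that both series ∑_{n≥0} a_n(z−c₁)⋯(z−c_n) and ∑_{n≥0} b_n(z−c₁)⋯(z−c_n) converge for all z ∈ D and have the same sum for all z ∈ D, then a_n = b_n for all n. -/
open Finset Metric Filter Topology

/-!
Subtracting the two series, it suffices to show that a Newton series `∑ aₙ (z - c₀)⋯(z - cₙ₋₁)`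
converging to `0` on the disc has all coefficients zero. Comparing with the terms at a point `z₀`
which is not a node (the nodes are countable, so such `z₀` exist near the boundary), `|z - cᵢ| / |z₀ - cᵢ| → |z - c| / |z₀ - c|` as `cᵢ → c`, so the series
converges uniformly, by comparison with a geometric series, on every disc `|z - c| ≤ t < |z₀ - c|`;
its sum is therefore continuous on the disc. If `a₀ = ⋯ = aₘ₋₁ = 0`, dividing by
`(z - c₀)⋯(z - cₘ₋₁)` shows that the shifted series `∑ aₘ₊ₙ (z - cₘ)⋯(z - cₘ₊ₙ₋₁)` vanishes off the
nodes, hence everywhere by continuity, and its value at `cₘ` is `aₘ`.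
-/

section Algebra

variable {R : Type*} [CommRing R]

def newtonTerm (a cs : ℕ → R) (n : ℕ) (z : R) : R :=
  a n * ∏ i ∈ range n, (z - cs i)

theorem sum_newtonTerm_range_add (a cs : ℕ → R) (z : R) {m : ℕ} (ha : ∀ i < m, a i = 0)
    (k : ℕ) :
    ∑ n ∈ range (m + k), newtonTerm a cs n z =
      (∏ i ∈ range m, (z - cs i)) *
        ∑ n ∈ range k, newtonTerm (fun n => a (m + n)) (fun i => cs (m + i)) n z := by
  rw [sum_range_add, sum_eq_zero fun i hi => by rw [newtonTerm, ha i (mem_range.1 hi), zero_mul],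
    zero_add, mul_sum]
  refine sum_congr rfl fun n _ => ?_
  rw [newtonTerm, newtonTerm, prod_range_add]
  ring

theorem sum_newtonTerm_range_succ_at_first_node (a cs : ℕ → R) (k : ℕ) :
    ∑ n ∈ range (k + 1), newtonTerm a cs n (cs 0) = a 0 := by
  simp [sum_range_succ', newtonTerm, prod_range_succ']

end Algebra

theorem summable_prod_range_of_tendsto {R : Type*} [NormedCommRing R] [CompleteSpace R]
    {β : ℕ → R} {l : R} (hβ : Tendsto β atTop (𝓝 l)) (hl : ‖l‖ < 1) :
    Summable fun n => ∏ i ∈ range n, β i := by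
  obtain ⟨θ, hlθ, hθ⟩ := exists_between hl
  refine summable_of_ratio_norm_eventually_le hθ ?_
  filter_upwards [hβ.norm.eventually (gt_mem_nhds hlθ)] with n hn
  rw [prod_range_succ, mul_comm θ]
  exact (norm_mul_le _ _).trans (by gcongr)

theorem Filter.Tendsto.tendsto_zero_of_sum_range {E : Type*} [AddCommGroup E] [TopologicalSpace E]
    [IsTopologicalAddGroup E] {f : ℕ → E} {L : E}
    (h : Tendsto (fun k => ∑ n ∈ range k, f n) atTop (𝓝 L)) : Tendsto f atTop (𝓝 0) := by
  simpa [sum_range_succ] using (h.comp (tendsto_add_atTop_nat 1)).sub h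

section Convergence

variable {𝕜 : Type*} [NormedField 𝕜] {a cs : ℕ → 𝕜} {c z₀ : 𝕜} {t : ℝ}

theorem norm_newtonTerm_le (hz₀ : ∀ i, z₀ ≠ cs i) {z : 𝕜} (hz : dist z c ≤ t) (n : ℕ) :
    ‖newtonTerm a cs n z‖ ≤
      (∏ i ∈ range n, (t + dist (cs i) c) / dist z₀ (cs i)) * ‖newtonTerm a cs n z₀‖ := by
  have hfactor (i : ℕ) : ‖z - cs i‖ ≤ (t + dist (cs i) c) / dist z₀ (cs i) * ‖z₀ - cs i‖ := by
    rw [← dist_eq_norm, ← dist_eq_norm, div_mul_cancel₀ _ (dist_ne_zero.2 (hz₀ i))]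
    calc dist z (cs i) ≤ dist z c + dist (cs i) c := dist_triangle_right _ _ _
      _ ≤ t + dist (cs i) c := by gcongr
  rw [newtonTerm, newtonTerm, norm_mul, norm_mul, norm_prod, norm_prod, mul_left_comm,
    ← prod_mul_distrib]
  gcongr with i
  exact hfactor i

theorem tendstoUniformlyOn_newtonTerm [CompleteSpace 𝕜] {M : ℝ}
    (hlim : Tendsto cs atTop (𝓝 c)) (hz₀ : ∀ i, z₀ ≠ cs i) (ht : 0 ≤ t) (htz₀ : t < dist z₀ c)
    (hM : ∀ n, ‖newtonTerm a cs n z₀‖ ≤ M) :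
    TendstoUniformlyOn (fun k z => ∑ n ∈ range k, newtonTerm a cs n z)
      (fun z => ∑' n, newtonTerm a cs n z) atTop (closedBall c t) := by
  have hz₀c : dist z₀ c ≠ 0 := (ht.trans_lt htz₀).ne'
  have hratio : Tendsto (fun i => (t + dist (cs i) c) / dist z₀ (cs i)) atTop
      (𝓝 (t / dist z₀ c)) := by
    have := ((tendsto_const_nhds (x := t)).add (hlim.dist (tendsto_const_nhds (x := c)))).div
      (tendsto_const_nhds.dist hlim) hz₀c
    rwa [dist_self, add_zero] at this
  have hlt : ‖t / dist z₀ c‖ < 1 := by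
    rw [Real.norm_of_nonneg (by positivity), div_lt_one (ht.trans_lt htz₀)]
    exact htz₀
  refine tendstoUniformlyOn_tsum_nat ((summable_prod_range_of_tendsto hratio hlt).mul_right M)
    fun n z hz => (norm_newtonTerm_le hz₀ (mem_closedBall.1 hz) n).trans <|
      mul_le_mul_of_nonneg_left (hM n) (prod_nonneg fun i _ => by positivity)

end Convergence

theorem tendstoLocallyUniformlyOn_newtonTerm {a cs : ℕ → ℂ} {c : ℂ} {r : ℝ} {S : Set ℂ}
    (hS : S.Countable) (hlim : Tendsto cs atTop (𝓝 c))
    (hbdd : ∀ z ∈ ball c r \ S, BddAbove (Set.range fun n => ‖newtonTerm a cs n z‖)) :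
    TendstoLocallyUniformlyOn (fun k z => ∑ n ∈ range k, newtonTerm a cs n z)
      (fun z => ∑' n, newtonTerm a cs n z) atTop (ball c r) := by
  refine tendstoLocallyUniformlyOn_of_forall_exists_nhds fun x hx => ?_
  obtain ⟨t, hxt, htr⟩ := exists_between (mem_ball.1 hx)
  have ht : 0 ≤ t := dist_nonneg.trans hxt.le
  have hannulus : (ball c r ∩ {z | t < dist z c}).Nonempty := by
    have hmid : dist (c + ((t + r) / 2 : ℝ)) c = (t + r) / 2 := by
      rw [dist_eq_norm, add_sub_cancel_left, Complex.norm_real, Real.norm_of_nonneg (by linarith)]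
    exact ⟨_, mem_ball.2 (by linarith), show t < _ by linarith⟩
  obtain ⟨z₀, ⟨hz₀r, htz₀⟩, hz₀⟩ := ((hS.union (Set.countable_range cs)).dense_compl ℂ).inter_open_nonempty _
    (isOpen_ball.inter (isOpen_lt continuous_const (continuous_id.dist continuous_const))) hannulus
  obtain ⟨hz₀S, hz₀cs⟩ := not_or.1 hz₀
  obtain ⟨M, hM⟩ := hbdd z₀ ⟨hz₀r, hz₀S⟩
  exact ⟨closedBall c t, mem_nhdsWithin_of_mem_nhds (closedBall_mem_nhds_of_mem hxt),
    tendstoUniformlyOn_newtonTerm hlim (fun i h => hz₀cs ⟨i, h.symm⟩) ht htz₀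
      fun n => hM ⟨n, rfl⟩⟩

theorem Set.EqOn.of_diff_countable {Y : Type*} [TopologicalSpace Y] [T2Space Y] {f g : ℂ → Y}
    {U S : Set ℂ} (h : Set.EqOn f g (U \ S)) (hS : S.Countable) (hU : IsOpen U)
    (hf : ContinuousOn f U) (hg : ContinuousOn g U) : Set.EqOn f g U :=
  h.of_subset_closure hf hg Set.sdiff_subset ((hS.dense_compl ℂ).open_subset_closure_inter hU)

theorem eq_zero_of_tendsto_sum_newtonTerm {a cs : ℕ → ℂ} {c : ℂ} {r : ℝ} (hcs : ∀ n, cs n ∈ ball c r)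
    (hlim : Tendsto cs atTop (𝓝 c))
    (h : ∀ z ∈ ball c r, Tendsto (fun k => ∑ n ∈ range k, newtonTerm a cs n z) atTop (𝓝 0)) :
    a = 0 := by
  funext m
  induction m using Nat.strong_induction_on with
  | _ m ih =>
  set b : ℕ → ℂ := fun n => a (m + n)
  set ds : ℕ → ℂ := fun i => cs (m + i)
  have hshift_zero : ∀ z ∈ ball c r \ Set.range cs,
      Tendsto (fun k => ∑ n ∈ range k, newtonTerm b ds n z) atTop (𝓝 0) := by
    rintro z ⟨hz, hzcs⟩
    have hP : ∏ i ∈ range m, (z - cs i) ≠ 0 :=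
      prod_ne_zero_iff.2 fun i _ => sub_ne_zero.2 fun hi => hzcs ⟨i, hi.symm⟩
    have := ((h z hz).comp (tendsto_add_atTop_nat m)).const_mul (∏ i ∈ range m, (z - cs i))⁻¹
    simpa only [Function.comp_def, add_comm _ m, sum_newtonTerm_range_add a cs z ih,
      inv_mul_cancel_left₀ hP, mul_zero] using this
  have hunif : TendstoLocallyUniformlyOn (fun k z => ∑ n ∈ range k, newtonTerm b ds n z)
      (fun z => ∑' n, newtonTerm b ds n z) atTop (ball c r) :=
    tendstoLocallyUniformlyOn_newtonTerm (Set.countable_range cs)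
      (hlim.comp (tendsto_add_atTop_nat m) |>.congr fun i => by simp [ds, add_comm])
      fun z hz => (hshift_zero z hz).tendsto_zero_of_sum_range.norm.bddAbove_range
  have hcont : ContinuousOn (fun z => ∑' n, newtonTerm b ds n z) (ball c r) :=
    hunif.continuousOn (Eventually.of_forall fun k =>
      (continuous_finsetSum _ fun n _ => by unfold newtonTerm; fun_prop).continuousOn).frequently
  have hvanish : Set.EqOn (fun z => ∑' n, newtonTerm b ds n z) 0 (ball c r) :=
    Set.EqOn.of_diff_countable
      (fun z hz => tendsto_nhds_unique (hunif.tendsto_at hz.1) (hshift_zero z hz))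
      (Set.countable_range cs) isOpen_ball hcont continuousOn_const
  have hnode : Tendsto (fun k => ∑ n ∈ range k, newtonTerm b ds n (ds 0)) atTop (𝓝 (a m)) :=
    (tendsto_add_atTop_iff_nat 1).1 <| by
      simp only [sum_newtonTerm_range_succ_at_first_node]
      exact tendsto_const_nhds
  exact tendsto_nhds_unique hnode ((hvanish (hcs m)) ▸ hunif.tendsto_at (hcs m))

theorem stmt13_general (c : ℂ) (r : ℝ)
    (cs : ℕ → ℂ) (hcs : ∀ n, cs n ∈ ball c r) (hlim : Tendsto cs atTop (𝓝 c))
    (a b : ℕ → ℂ)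
    (h : ∀ z ∈ ball c r, ∃ L : ℂ,
      Tendsto (fun k => ∑ n ∈ Finset.range k, a n * ∏ i ∈ Finset.range n, (z - cs i))
        atTop (𝓝 L) ∧
      Tendsto (fun k => ∑ n ∈ Finset.range k, b n * ∏ i ∈ Finset.range n, (z - cs i))
        atTop (𝓝 L)) :
    a = b := by
  refine sub_eq_zero.1 (eq_zero_of_tendsto_sum_newtonTerm hcs hlim fun z hz => ?_)
  obtain ⟨L, ha, hb⟩ := h z hz
  simpa [newtonTerm, sub_mul, sum_sub_distrib] using ha.sub hb

/-- Uniqueness of Newton series coefficients: if two series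
`∑ a_n (z−c₁)⋯(z−c_n)` and `∑ b_n (z−c₁)⋯(z−c_n)` (nodes in the disc, `c_n → c`)
converge for every `z` in the disc and have the same sum there, then `a_n = b_n`. -/
theorem stmt13 (c : ℂ) (r : ℝ) (hr : 0 < r)
    (cs : ℕ → ℂ) (hcs : ∀ n, cs n ∈ ball c r) (hlim : Tendsto cs atTop (𝓝 c))
    (a b : ℕ → ℂ)
    (h : ∀ z ∈ ball c r, ∃ L : ℂ,
      Tendsto (fun k => ∑ n ∈ Finset.range k, a n * ∏ i ∈ Finset.range n, (z - cs i))
        atTop (𝓝 L) ∧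
      Tendsto (fun k => ∑ n ∈ Finset.range k, b n * ∏ i ∈ Finset.range n, (z - cs i))
        atTop (𝓝 L)) :
    a = b :=
  stmt13_general c r cs hcs hlim a b h
end

section
/- Let Γ₁ be a positively oriented circle centered at d, let (d_n) be a sequence converging to d with each d_n strictly inside Γ₁, and let z lie strictly outside Γ₁. Then for every ξ on the circle |Γ₁|, the series ∑_{n≥0} ((ξ−d₁)⋯(ξ−d_n))/((z−d₁)⋯(z−d_{n+1})) converges absolutely, and its sum equals 1/(z−ξ) = −1/(ξ−z). -/
open Finset Metric Filter Topology

/-- For a circle `C(d, R)`, nodes `d_n → d` strictly inside the circle, and `z` strictly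
outside the closed disc with `z ≠ d_n` for all `n`: for each `ξ` on the circle the series
`∑_{n≥0} ((ξ−d₁)⋯(ξ−d_n))/((z−d₁)⋯(z−d_{n+1}))` converges absolutely with sum
`−1/(ξ−z)`. -/
theorem stmt15 (d : ℂ) (R : ℝ) (hR : 0 < R)
    (ds : ℕ → ℂ) (hds : ∀ n, ds n ∈ ball d R) (hlim : Tendsto ds atTop (𝓝 d))
    (z : ℂ) (hz : z ∉ closedBall d R) (hzds : ∀ n, z ≠ ds n) :
    ∀ ξ ∈ sphere d R,
      Summable (fun n : ℕ =>
        ‖(∏ i ∈ Finset.range n, (ξ - ds i)) /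
          ∏ i ∈ Finset.range (n + 1), (z - ds i)‖) ∧
      ∑' n : ℕ, (∏ i ∈ Finset.range n, (ξ - ds i)) /
          ∏ i ∈ Finset.range (n + 1), (z - ds i) = -(1 / (ξ - z)) := by
  intro ξ hξ
  have hzd : R < dist z d := by simpa [Metric.mem_closedBall, not_le] using hz
  have hξd : dist ξ d = R := Metric.mem_sphere.mp hξ
  have hzds' : ∀ n, z - ds n ≠ 0 := fun n => sub_ne_zero.mpr (hzds n)
  have hzξ : z - ξ ≠ 0 := by
    intro h
    rw [sub_eq_zero.mp h, hξd] at hzd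
    exact lt_irrefl R hzd
  obtain ⟨a, ha⟩ : ∃ a : ℕ → ℂ, a = fun n : ℕ =>
      (∏ i ∈ Finset.range n, (ξ - ds i)) /
        ∏ i ∈ Finset.range (n + 1), (z - ds i) := ⟨_, rfl⟩
  set D := dist z d with hD
  set ε := (D - R) / 3 with hε
  set r := (R + ε) / (D - ε) with hr
  have hεpos : 0 < ε := by simp only [hε]; linarith
  have hDε : 0 < D - ε := by simp only [hε]; linarith
  have hr1 : r < 1 := by rw [hr, div_lt_one hDε]; simp only [hε]; linarith
  obtain ⟨N, hN⟩ := Metric.tendsto_atTop.mp hlim ε hεpos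
  have key : ∀ n, a (n + 1) = a n * ((ξ - ds n) / (z - ds (n + 1))) := by
    intro n
    simp only [ha, prod_range_succ, div_mul_div_comm]
  have h1 : ∀ n ≥ N, ‖ξ - ds n‖ ≤ R + ε := by
    intro n hn
    have ht : dist ξ (ds n) ≤ dist ξ d + dist d (ds n) := dist_triangle _ _ _
    rw [dist_comm d (ds n)] at ht
    have h2 := (hN n hn).le
    calc ‖ξ - ds n‖ = dist ξ (ds n) := (dist_eq_norm _ _).symm
      _ ≤ R + ε := by rw [hξd] at ht; linarith
  have h2 : ∀ n ≥ N, D - ε ≤ ‖z - ds n‖ := by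
    intro n hn
    have ht : dist z d ≤ dist z (ds n) + dist (ds n) d := dist_triangle _ _ _
    have h2 := (hN n hn).le
    calc D - ε ≤ dist z (ds n) := by rw [hD] at *; linarith
      _ = ‖z - ds n‖ := dist_eq_norm _ _
  have hbound : ∀ n ≥ N, ‖a (n + 1)‖ ≤ r * ‖a n‖ := by
    intro n hn
    have hb : ‖(ξ - ds n) / (z - ds (n + 1))‖ ≤ r := by
      rw [norm_div, hr]
      exact div_le_div₀ (by linarith) (h1 n hn) hDε (h2 (n + 1) (by omega))
    calc ‖a (n + 1)‖ = ‖a n‖ * ‖(ξ - ds n) / (z - ds (n + 1))‖ := by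
          rw [key n, norm_mul]
      _ ≤ ‖a n‖ * r := mul_le_mul_of_nonneg_left hb (norm_nonneg _)
      _ = r * ‖a n‖ := mul_comm _ _
  have hsum : Summable (fun n => ‖a n‖) := by
    apply summable_of_ratio_norm_eventually_le hr1
    filter_upwards [eventually_ge_atTop N] with n hn
    rw [Real.norm_of_nonneg (norm_nonneg _), Real.norm_of_nonneg (norm_nonneg _)]
    exact hbound n hn
  have hsa : Summable a := hsum.of_norm
  have ha0 : Tendsto a atTop (𝓝 0) := hsa.tendsto_atTop_zero
  have hT0 : Tendsto (fun n => a n * (z - ds n)) atTop (𝓝 0) := by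
    have := ha0.mul (tendsto_const_nhds.sub hlim : Tendsto (fun n => z - ds n) atTop (𝓝 (z - d)))
    simpa using this
  have hps : ∀ n, ∑ i ∈ Finset.range n, a i = (1 - a n * (z - ds n)) / (z - ξ) := by
    intro n
    induction n with
    | zero =>
      have h00 : a 0 * (z - ds 0) = 1 := by
        simp only [ha, Finset.prod_range_succ, Finset.prod_range_zero, one_mul]
        rw [one_div, inv_mul_cancel₀ (hzds' 0)]
      rw [Finset.sum_range_zero, h00]
      simp
    | succ n ih =>
      have hT : a (n + 1) * (z - ds (n + 1)) = a n * (ξ - ds n) := by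
        rw [key n, mul_assoc, div_mul_cancel₀ _ (hzds' (n + 1))]
      rw [Finset.sum_range_succ, ih, hT, div_add' _ _ _ hzξ, div_eq_div_iff hzξ hzξ]
      ring
  have hhs : HasSum a (-(1 / (ξ - z))) := by
    rw [hsa.hasSum_iff_tendsto_nat]
    have hlim2 : Tendsto (fun n => (1 - a n * (z - ds n)) / (z - ξ)) atTop
        (𝓝 (-(1 / (ξ - z)))) := by
      have h := ((tendsto_const_nhds (x := (1:ℂ))).sub hT0).div_const (z - ξ)
      have heq : ((1:ℂ) - 0) / (z - ξ) = -(1 / (ξ - z)) := by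
        rw [sub_zero, show ξ - z = -(z - ξ) by ring, div_neg, neg_neg]
      rw [heq] at h
      exact h
    exact Tendsto.congr (fun n => (hps n).symm) hlim2
  constructor
  · have he : (fun n : ℕ =>
        ‖(∏ i ∈ Finset.range n, (ξ - ds i)) /
          ∏ i ∈ Finset.range (n + 1), (z - ds i)‖) = fun n => ‖a n‖ := by
      funext n; rw [ha]
    rw [he]; exact hsum
  · rw [← ha]; exact hhs.tsum_eq
end

section
/- Let f be holomorphic on an open set G ⊆ ℂ and let Γ be a positively oriented circle whose closed disc lies in G. For points c₁,…,c_{n+1} in the open disc bounded by Γ, with 0 ≤ k ≤ n, the divided difference satisfies the nesting identity Δⁿf(c₁,…,c_{n+1}) = Δᵏg(c_{n−k+1},…,c_{n+1}), where g(w) := Δ^{n−k}f(c₁,…,c_{n−k},w) is holomorphic in w on the open disc bounded by Γ. -/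
/-!
With `φ ξ = f ξ / ∏ᵢ (ξ - aᵢ)`, the right side is an iterated contour integral of `φ`.
Exchanging the order of integration reduces the identity to the case of the Cauchy kernel `w ↦ 1/(ξ - w)`:
for `ξ` outside the small circle,
`(2πi)⁻¹ ∮_{C(w₀,R')} dζ / ((ξ - ζ) ∏ⱼ (ζ - bⱼ)) = 1 / ∏ⱼ (ξ - bⱼ)`.
This follows by induction on the number of nodes from the partial fraction
`1/((ξ - ζ)(ζ - β)) = (ξ - β)⁻¹ (1/(ξ - ζ) + 1/(ζ - β))` and from the vanishing of
`∮ dζ / ∏ⱼ (ζ - bⱼ)` for two or more nodes inside the circle. The latter is proved by strong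
induction: two distinct nodes are separated by partial fractions, and if all nodes coincide the
integrand is `(ζ - b)⁻ⁿ` with `n ≥ 2`, which has a primitive.
-/

open Finset Metric

open Complex Real

theorem Finset.inv_prod_erase {ι K : Type*} [DecidableEq ι] [Field K] {s : Finset ι} {i : ι}
    (f : ι → K) (hi : i ∈ s) (hf : f i ≠ 0) :
    (∏ l ∈ s.erase i, f l)⁻¹ = f i * (∏ l ∈ s, f l)⁻¹ := by
  rw [← mul_prod_erase s f hi, mul_inv, ← mul_assoc, mul_inv_cancel₀ hf, one_mul]

theorem sub_ne_zero_of_mem_sphere_of_mem_ball {c z w : ℂ} {r : ℝ} (hz : z ∈ sphere c r)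
    (hw : w ∈ ball c r) : z - w ≠ 0 :=
  sub_ne_zero.2 (sphere_disjoint_ball.ne_of_mem hz hw)

theorem continuousOn_inv_prod_sub {ι : Type*} {s : Finset ι} {b : ι → ℂ} {t : Set ℂ}
    (h : ∀ z ∈ t, ∀ j ∈ s, z - b j ≠ 0) :
    ContinuousOn (fun z => (∏ j ∈ s, (z - b j))⁻¹) t :=
  (continuousOn_finsetProd s fun _ _ => by fun_prop).inv₀ fun z hz =>
    prod_ne_zero_iff.2 (h z hz)

theorem circleIntegral_circleIntegral_swap {E : Type*} [NormedAddCommGroup E] [NormedSpace ℂ E]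
    [CompleteSpace E] {F : ℂ → ℂ → E} {c c' : ℂ} {R R' : ℝ}
    (hF : ContinuousOn (Function.uncurry F) (sphere c |R| ×ˢ sphere c' |R'|)) :
    (∮ z in C(c, R), ∮ w in C(c', R'), F z w) = ∮ w in C(c', R'), ∮ z in C(c, R), F z w := by
  simp only [circleIntegral, ← intervalIntegral.integral_smul]
  rw [MeasureTheory.intervalIntegral_intervalIntegral_swap]
  · simp only [smul_comm (deriv (circleMap c R) _)]
  have hγ : Continuous fun p : ℝ × ℝ => (circleMap c R p.1, circleMap c' R' p.2) :=
    ((continuous_circleMap c R).comp continuous_fst).prodMk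
      ((continuous_circleMap c' R').comp continuous_snd)
  have hcont : Continuous fun p : ℝ × ℝ =>
      deriv (circleMap c R) p.1 • deriv (circleMap c' R') p.2 •
        F (circleMap c R p.1) (circleMap c' R' p.2) := by
    simp only [deriv_circleMap]
    exact ((continuous_circleMap 0 R).comp continuous_fst |>.mul continuous_const).smul
      (((continuous_circleMap 0 R').comp continuous_snd |>.mul continuous_const).smul
        (hF.comp_continuous hγ fun p =>
          ⟨circleMap_mem_sphere' _ _ _, circleMap_mem_sphere' _ _ _⟩))
  exact (hcont.continuousOn.integrableOn_compact (isCompact_uIcc.prod isCompact_uIcc)).mono_set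
    (Set.prod_mono Set.uIoc_subset_uIcc Set.uIoc_subset_uIcc)

section NodesInBall

variable {c : ℂ} {R : ℝ}

theorem circleIntegral_inv_prod_sub {ι : Type*} [DecidableEq ι] {b : ι → ℂ} {s : Finset ι}
    (hs : s.Nonempty) (hb : ∀ j ∈ s, b j ∈ ball c R) :
    (∮ z in C(c, R), (∏ j ∈ s, (z - b j))⁻¹) = if #s = 1 then 2 * π * I else 0 := by
  have hR : 0 ≤ R := (pos_of_mem_ball (hb _ hs.choose_spec)).le
  induction s using Finset.strongInduction with
  | _ s IH =>
  obtain ⟨i, rfl⟩ | hcard := hs.exists_eq_singleton_or_nontrivial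
  · simpa using circleIntegral.integral_sub_inv_of_mem_ball (hb i (mem_singleton_self i))
  have h2 : 1 < #s := one_lt_card_iff_nontrivial.2 hcard
  rw [if_neg h2.ne']
  by_cases! hconst : ∀ i ∈ s, ∀ j ∈ s, b i = b j
  · obtain ⟨i, hi⟩ := hs
    rw [← circleIntegral.integral_sub_zpow_of_ne (n := -(#s : ℤ)) (by omega) c (b i) R]
    refine circleIntegral.integral_congr hR fun z _ => ?_
    rw [prod_congr rfl fun j hj => by rw [hconst j hj i hi], prod_const, zpow_neg, zpow_natCast]
  obtain ⟨i, hi, j, hj, hij⟩ := hconst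
  have hnode : ∀ z ∈ sphere c R, ∀ l ∈ s, z - b l ≠ 0 := fun z hz l hl =>
    sub_ne_zero_of_mem_sphere_of_mem_ball hz (hb l hl)
  have hpartial : Set.EqOn (fun z => (∏ l ∈ s, (z - b l))⁻¹)
      (fun z => (b j - b i)⁻¹ * ((∏ l ∈ s.erase i, (z - b l))⁻¹ -
        (∏ l ∈ s.erase j, (z - b l))⁻¹)) (sphere c R) := fun z hz => by
    dsimp only
    rw [inv_prod_erase _ hi (hnode z hz i hi), inv_prod_erase _ hj (hnode z hz j hj), ← sub_mul,
      sub_sub_sub_cancel_left, inv_mul_cancel_left₀ (sub_ne_zero.2 hij.symm)]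
  have hint : ∀ l ∈ s, CircleIntegrable (fun z => (∏ l' ∈ s.erase l, (z - b l'))⁻¹) c R :=
    fun l _ => (continuousOn_inv_prod_sub fun z hz l' hl' =>
      hnode z hz l' (mem_of_mem_erase hl')).circleIntegrable hR
  have herase : ∀ l ∈ s, (∮ z in C(c, R), (∏ l' ∈ s.erase l, (z - b l'))⁻¹) =
      if #s - 1 = 1 then 2 * π * I else 0 := fun l hl => by
    rw [IH _ (erase_ssubset hl) hcard.erase_nonempty fun l' hl' => hb l' (mem_of_mem_erase hl'),
      card_erase_of_mem hl]
  rw [circleIntegral.integral_congr hR hpartial, circleIntegral.integral_const_mul,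
    circleIntegral.integral_sub (hint i hi) (hint j hj), herase i hi, herase j hj, sub_self,
    mul_zero]

theorem circleIntegral_inv_sub_of_notMem_closedBall {ξ : ℂ} (hR : 0 ≤ R)
    (hξ : ξ ∉ closedBall c R) : (∮ z in C(c, R), (ξ - z)⁻¹) = 0 := by
  have hne : ∀ z ∈ closedBall c R, ξ - z ≠ 0 := fun z hz => sub_ne_zero.2 fun h => hξ (h ▸ hz)
  exact circleIntegral_eq_zero_of_differentiable_on_off_countable hR Set.countable_empty
    (by fun_prop (disch := assumption))
    fun z hz => by fun_prop (disch := exact hne z (ball_subset_closedBall hz.1))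

theorem circleIntegral_inv_sub_mul_prod_castSucc {ξ : ℂ} (hξ : ξ ∉ closedBall c R) {m : ℕ}
    {b : Fin (m + 1) → ℂ} (hb : ∀ j, b j ∈ ball c R) :
    (∮ z in C(c, R), ((ξ - z) * ∏ j, (z - b j))⁻¹) =
      (ξ - b (Fin.last m))⁻¹ * ((∮ z in C(c, R), ((ξ - z) * ∏ j : Fin m, (z - b j.castSucc))⁻¹) +
        ∮ z in C(c, R), (∏ j, (z - b j))⁻¹) := by
  have hR : 0 ≤ R := (pos_of_mem_ball (hb 0)).le
  have hξz : ∀ z ∈ sphere c R, ξ - z ≠ 0 := fun z hz =>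
    sub_ne_zero.2 fun h => hξ (h ▸ sphere_subset_closedBall hz)
  have hnode : ∀ z ∈ sphere c R, ∀ j ∈ (univ : Finset (Fin (m + 1))), z - b j ≠ 0 :=
    fun z hz j _ => sub_ne_zero_of_mem_sphere_of_mem_ball hz (hb j)
  have hξb : ξ - b (Fin.last m) ≠ 0 :=
    sub_ne_zero.2 fun h => hξ (h ▸ ball_subset_closedBall (hb _))
  have hpartial : Set.EqOn (fun z => ((ξ - z) * ∏ j, (z - b j))⁻¹)
      (fun z => (ξ - b (Fin.last m))⁻¹ * (((ξ - z) * ∏ j : Fin m, (z - b j.castSucc))⁻¹ +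
        (∏ j, (z - b j))⁻¹)) (sphere c R) := fun z hz => by
    have := hξz z hz
    have := hnode z hz (Fin.last m) (mem_univ _)
    simp only [Fin.prod_univ_castSucc]
    field_simp
    ring
  have hint : CircleIntegrable (fun z => ((ξ - z) * ∏ j : Fin m, (z - b j.castSucc))⁻¹) c R :=
    ContinuousOn.circleIntegrable hR <| ContinuousOn.inv₀ (by fun_prop) fun z hz =>
      mul_ne_zero (hξz z hz) (prod_ne_zero_iff.2 fun j _ => hnode z hz _ (mem_univ _))
  rw [circleIntegral.integral_congr hR hpartial, circleIntegral.integral_const_mul,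
    circleIntegral.integral_add hint ((continuousOn_inv_prod_sub hnode).circleIntegrable hR)]

theorem circleIntegral_inv_sub_mul_prod {ξ : ℂ} (hξ : ξ ∉ closedBall c R) {m : ℕ}
    (b : Fin (m + 1) → ℂ) (hb : ∀ j, b j ∈ ball c R) :
    (∮ z in C(c, R), ((ξ - z) * ∏ j, (z - b j))⁻¹) = 2 * π * I * (∏ j, (ξ - b j))⁻¹ := by
  have hR : 0 ≤ R := (pos_of_mem_ball (hb 0)).le
  induction m with
  | zero =>
    rw [circleIntegral_inv_sub_mul_prod_castSucc hξ hb,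
      circleIntegral_inv_prod_sub univ_nonempty fun j _ => hb j, card_univ, Fintype.card_fin,
      if_pos rfl, Fin.prod_univ_one, Fin.last_zero]
    simp only [univ_eq_empty, prod_empty, mul_one,
      circleIntegral_inv_sub_of_notMem_closedBall hR hξ, zero_add, mul_comm]
  | succ m IH =>
    rw [circleIntegral_inv_sub_mul_prod_castSucc hξ hb, IH _ fun j => hb _,
      circleIntegral_inv_prod_sub univ_nonempty fun j _ => hb j, card_univ, Fintype.card_fin,
      if_neg (by omega), add_zero, Fin.prod_univ_castSucc (fun j => ξ - b j), mul_inv]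
    ring

end NodesInBall

theorem circleIntegral_circleIntegral_div_sub_div_prod {c : ℂ} {R R' : ℝ} (hRR' : R' < R)
    {φ : ℂ → ℂ} (hφ : ContinuousOn φ (sphere c R)) {m : ℕ} (b : Fin (m + 1) → ℂ)
    (hb : ∀ j, b j ∈ ball c R') :
    (∮ ζ in C(c, R'), (∮ ξ in C(c, R), φ ξ / (ξ - ζ)) / ∏ j, (ζ - b j)) =
      2 * π * I * ∮ ξ in C(c, R), φ ξ / ∏ j, (ξ - b j) := by
  have hR' : 0 < R' := pos_of_mem_ball (hb 0)
  have hR : 0 < R := hR'.trans hRR'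
  have hcont : ContinuousOn (Function.uncurry fun ξ ζ => φ ξ * ((ξ - ζ) * ∏ j, (ζ - b j))⁻¹)
      (sphere c |R| ×ˢ sphere c |R'|) := by
    rw [abs_of_pos hR, abs_of_pos hR']
    refine (hφ.comp continuousOn_fst fun p hp => hp.1).mul (ContinuousOn.inv₀ (by fun_prop) ?_)
    rintro ⟨ξ, ζ⟩ ⟨hξ, hζ⟩
    exact mul_ne_zero (sub_ne_zero_of_mem_sphere_of_mem_ball hξ
      (sphere_subset_closedBall.trans (closedBall_subset_ball hRR') hζ))
      (prod_ne_zero_iff.2 fun j _ => sub_ne_zero_of_mem_sphere_of_mem_ball hζ (hb j))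
  calc (∮ ζ in C(c, R'), (∮ ξ in C(c, R), φ ξ / (ξ - ζ)) / ∏ j, (ζ - b j))
      = ∮ ζ in C(c, R'), ∮ ξ in C(c, R), φ ξ * ((ξ - ζ) * ∏ j, (ζ - b j))⁻¹ := by
        refine circleIntegral.integral_congr hR'.le fun ζ _ => ?_
        simp only [div_eq_mul_inv, ← smul_eq_mul, ← circleIntegral.integral_smul_const]
        simp only [smul_eq_mul, mul_inv, mul_assoc]
    _ = ∮ ξ in C(c, R), ∮ ζ in C(c, R'), φ ξ * ((ξ - ζ) * ∏ j, (ζ - b j))⁻¹ :=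
        (circleIntegral_circleIntegral_swap hcont).symm
    _ = ∮ ξ in C(c, R), φ ξ * (2 * π * I * (∏ j, (ξ - b j))⁻¹) := by
        refine circleIntegral.integral_congr hR.le fun ξ hξ => ?_
        have hξ' : ξ ∉ closedBall c R' := fun h =>
          sphere_disjoint_ball.ne_of_mem hξ (closedBall_subset_ball hRR' h) rfl
        rw [circleIntegral.integral_const_mul, circleIntegral_inv_sub_mul_prod hξ' b hb]
    _ = 2 * π * I * ∮ ξ in C(c, R), φ ξ / ∏ j, (ξ - b j) := by
        rw [← circleIntegral.integral_const_mul]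
        simp only [div_eq_mul_inv, mul_left_comm]

/-- `a = (c₁,…,c_{n−k})`, `b = (c_{n−k+1},…,c_{n+1})`, and `Δ` is `(2πi)⁻¹ • ∮`; the outer
divided difference of `g` is taken over the smaller circle `C(w₀, R')`. -/
theorem stmt17_general (G : Set ℂ) (f : ℂ → ℂ) (hf : DifferentiableOn ℂ f G)
    (p k : ℕ) (w₀ : ℂ) (R R' : ℝ) (hRR' : R' < R)
    (hsub : closedBall w₀ R ⊆ G)
    (a : Fin p → ℂ) (ha : ∀ i, a i ∈ ball w₀ R')
    (b : Fin (k + 1) → ℂ) (hb : ∀ j, b j ∈ ball w₀ R') :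
    (2 * Real.pi * Complex.I)⁻¹ •
        (∮ ξ in C(w₀, R),
          f ξ / ((∏ i : Fin p, (ξ - a i)) * ∏ j : Fin (k + 1), (ξ - b j)))
      = (2 * Real.pi * Complex.I)⁻¹ •
          (∮ ζ in C(w₀, R'),
            ((2 * Real.pi * Complex.I)⁻¹ •
                (∮ ξ in C(w₀, R), f ξ / ((∏ i : Fin p, (ξ - a i)) * (ξ - ζ))))
              / ∏ j : Fin (k + 1), (ζ - b j)) := by
  have hφ : ContinuousOn (fun ξ => f ξ / ∏ i, (ξ - a i)) (sphere w₀ R) :=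
    (hf.continuousOn.mono (sphere_subset_closedBall.trans hsub)).div (by fun_prop)
      fun ξ hξ => prod_ne_zero_iff.2 fun i _ => sub_ne_zero_of_mem_sphere_of_mem_ball hξ
        (ball_subset_ball hRR'.le (ha i))
  simp only [← div_div, smul_div_assoc, circleIntegral.integral_smul]
  rw [circleIntegral_circleIntegral_div_sub_div_prod hRR' hφ b hb, ← smul_eq_mul (2 * π * I),
    inv_smul_smul₀ two_pi_I_ne_zero]

/-- Nesting identity for divided differences: splitting the nodes into a first block
`a = (c₁,…,c_{n−k})` and a second block `b = (c_{n−k+1},…,c_{n+1})` (of `k+1` nodes),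
one has `Δⁿf(c₁,…,c_{n+1}) = Δᵏg(c_{n−k+1},…,c_{n+1})` where
`g(w) := Δ^{n−k}f(c₁,…,c_{n−k},w)`.  The outer divided difference of `g` is computed
over a slightly smaller circle `C(w₀, R')` inside `C(w₀, R)`, on which `g` is
holomorphic. -/
theorem stmt17 (G : Set ℂ) (hG : IsOpen G) (f : ℂ → ℂ) (hf : DifferentiableOn ℂ f G)
    (p k : ℕ) (w₀ : ℂ) (R R' : ℝ) (hR' : 0 < R') (hRR' : R' < R)
    (hsub : closedBall w₀ R ⊆ G)
    (a : Fin p → ℂ) (ha : ∀ i, a i ∈ ball w₀ R')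
    (b : Fin (k + 1) → ℂ) (hb : ∀ j, b j ∈ ball w₀ R') :
    (2 * Real.pi * Complex.I)⁻¹ •
        (∮ ξ in C(w₀, R),
          f ξ / ((∏ i : Fin p, (ξ - a i)) * ∏ j : Fin (k + 1), (ξ - b j)))
      = (2 * Real.pi * Complex.I)⁻¹ •
          (∮ ζ in C(w₀, R'),
            ((2 * Real.pi * Complex.I)⁻¹ •
                (∮ ξ in C(w₀, R), f ξ / ((∏ i : Fin p, (ξ - a i)) * (ξ - ζ))))
              / ∏ j : Fin (k + 1), (ζ - b j)) :=
  stmt17_general G f hf p k w₀ R R' hRR' hsub a ha b hb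
end
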